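/- Let F and Q be exchangeable information structures on S^N with identical, strictly positive marginals, and suppose F is CAD-higher than Q. Then for every affine private-value coordination game Γ and every strategy σ : S → {0,1}: U(σ,s;F) ≥ U(σ,s;Q) for every s with σ(s) = 1, and U(σ,s;F) ≤ U(σ,s;Q) for every s with σ(s) = 0. -/
import Mathlib


open Finset

def IsPMF {n : ℕ} {S : Type*} [Fintype S] (F : (Fin (n + 2) → S) → ℝ) : Prop :=
  (∀ t, 0 ≤ F t) ∧ ∑ t : Fin (n + 2) → S, F t = 1

def Exchangeable {n : ℕ} {S : Type*} [Fintype S] (F : (Fin (n + 2) → S) → ℝ) : Prop :=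
  ∀ (π : Equiv.Perm (Fin (n + 2))) (t : Fin (n + 2) → S), F (t ∘ π) = F t

noncomputable def marg {n : ℕ} {S : Type*} [Fintype S] [DecidableEq S]
    (F : (Fin (n + 2) → S) → ℝ) (s : S) : ℝ :=
  ∑ t : Fin (n + 2) → S, if t 0 = s then F t else 0

noncomputable def condProb {n : ℕ} {S : Type*} [Fintype S] [DecidableEq S]
    (F : (Fin (n + 2) → S) → ℝ) (s : S) (K : Finset S) : ℝ :=
  (∑ t : Fin (n + 2) → S, if t 0 = s ∧ t 1 ∈ K then F t else 0) / marg F s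

def CAD {n : ℕ} {S : Type*} [Fintype S] [DecidableEq S]
    (F Q : (Fin (n + 2) → S) → ℝ) : Prop :=
  (∀ s, marg F s = marg Q s) ∧
  ∀ s : S, condProb F s {s} ≥ condProb Q s {s} ∧
    ∀ s' : S, s' ≠ s → condProb F s {s'} ≤ condProb Q s {s'}

structure AffineGame (S : Type*) where
  α : S → ℝ
  β : S → ℝ
  k : ℝ
  l : ℝ
  hβ : ∀ s, 0 ≤ β s
  hk : 0 < k

noncomputable def payoff {S : Type*} (G : AffineGame S) (A : ℕ) (s : S) : ℝ :=
  G.α s + G.β s * (G.k * (A : ℝ) + G.l)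

def acts {n : ℕ} {S : Type*} (σ : S → Bool) (t : Fin (n + 2) → S) : ℕ :=
  (univ.filter (fun j : Fin (n + 2) => j ≠ 0 ∧ σ (t j) = true)).card

noncomputable def U {n : ℕ} {S : Type*} [Fintype S] [DecidableEq S]
    (G : AffineGame S) (F : (Fin (n + 2) → S) → ℝ) (σ : S → Bool) (s : S) : ℝ :=
  (∑ t : Fin (n + 2) → S, if t 0 = s then F t * payoff G (acts σ t) s else 0) / marg F s


section Aux
variable {n : ℕ} {S : Type*} [Fintype S] [DecidableEq S]

noncomputable def numK (F : (Fin (n + 2) → S) → ℝ) (s : S) (K : Finset S) : ℝ :=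
  ∑ t : Fin (n + 2) → S, if t 0 = s ∧ t 1 ∈ K then F t else 0

lemma condProb_eq (F : (Fin (n + 2) → S) → ℝ) (s : S) (K : Finset S) :
    condProb F s K = numK F s K / marg F s := rfl

lemma numK_compl (F : (Fin (n + 2) → S) → ℝ) (s : S) (K : Finset S) :
    numK F s K + numK F s Kᶜ = marg F s := by
  rw [numK, numK, marg, ← Finset.sum_add_distrib]
  refine Finset.sum_congr rfl fun t _ => ?_
  by_cases h0 : t 0 = s <;> by_cases h1 : t 1 ∈ K <;>
    simp [h0, h1]

lemma numK_sum_singletons (F : (Fin (n + 2) → S) → ℝ) (s : S) (K : Finset S) :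
    numK F s K = ∑ s' ∈ K, numK F s {s'} := by
  simp only [numK]
  rw [Finset.sum_comm]
  refine Finset.sum_congr rfl fun t _ => ?_
  by_cases h0 : t 0 = s
  · simp only [h0, true_and, Finset.mem_singleton]
    rw [Finset.sum_ite_eq K (t 1) (fun _ => F t)]
  · simp [h0]

lemma sum_swap_coord (F : (Fin (n + 2) → S) → ℝ) (hFex : Exchangeable F) (s : S)
    (σ : S → Bool) (j : Fin (n + 2)) (hj : j ≠ 0) :
    (∑ t : Fin (n + 2) → S, if t 0 = s ∧ σ (t j) = true then F t else 0)
      = ∑ t : Fin (n + 2) → S, if t 0 = s ∧ σ (t 1) = true then F t else 0 := by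
  have h10 : (1 : Fin (n + 2)) ≠ 0 := by
    intro h
    simpa using congrArg Fin.val h
  refine Fintype.sum_equiv ((Equiv.swap (1 : Fin (n + 2)) j).arrowCongr (Equiv.refl S)) _ _ ?_
  intro t
  have he : ∀ x, ((Equiv.swap (1 : Fin (n + 2)) j).arrowCongr (Equiv.refl S)) t x
      = t (Equiv.swap (1 : Fin (n + 2)) j x) := by
    intro x; simp [Equiv.arrowCongr_apply, Equiv.symm_swap]
  have hfun : ((Equiv.swap (1 : Fin (n + 2)) j).arrowCongr (Equiv.refl S)) t
      = t ∘ (Equiv.swap (1 : Fin (n + 2)) j) := funext he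
  have h0 : Equiv.swap (1 : Fin (n + 2)) j 0 = 0 :=
    Equiv.swap_apply_of_ne_of_ne (Ne.symm h10) (Ne.symm hj)
  have h1 : Equiv.swap (1 : Fin (n + 2)) j 1 = j := Equiv.swap_apply_left 1 j
  rw [hfun]
  have hF : F (t ∘ (Equiv.swap (1 : Fin (n + 2)) j)) = F t := hFex _ t
  simp only [Function.comp_apply, h0, h1, hF]

lemma U_eq (F : (Fin (n + 2) → S) → ℝ) (hFex : Exchangeable F)
    (G : AffineGame S) (σ : S → Bool) (s : S) (hpos : marg F s ≠ 0) :
    U G F σ s = G.α s + G.β s * (G.k * ((n + 1 : ℝ) *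
      (numK F s (univ.filter fun s' => σ s' = true) / marg F s)) + G.l) := by
  set K : Finset S := univ.filter fun s' => σ s' = true with hK
  have hacts : ∀ t : Fin (n + 2) → S, ((acts σ t : ℕ) : ℝ)
      = ∑ j : Fin (n + 2), (if j ≠ 0 ∧ σ (t j) = true then (1 : ℝ) else 0) := by
    intro t
    rw [acts, Finset.card_filter]
    push_cast
    refine Finset.sum_congr rfl fun j _ => ?_
    split_ifs <;> simp
  have hS1 : (∑ t : Fin (n + 2) → S, if t 0 = s then F t * ((acts σ t : ℕ) : ℝ) else 0)
      = (n + 1 : ℝ) * numK F s K := by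
    have step1 : (∑ t : Fin (n + 2) → S, if t 0 = s then F t * ((acts σ t : ℕ) : ℝ) else 0)
        = ∑ t : Fin (n + 2) → S, ∑ j : Fin (n + 2),
            (if t 0 = s ∧ j ≠ 0 ∧ σ (t j) = true then F t else 0) := by
      refine Finset.sum_congr rfl fun t _ => ?_
      by_cases h0 : t 0 = s
      · simp only [h0, if_true, true_and, hacts t, Finset.mul_sum]
        refine Finset.sum_congr rfl fun j _ => ?_
        split_ifs <;> simp
      · simp [h0]
    rw [step1, Finset.sum_comm]
    have step2 : ∀ j : Fin (n + 2),
        (∑ t : Fin (n + 2) → S, if t 0 = s ∧ j ≠ 0 ∧ σ (t j) = true then F t else 0)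
          = if j ≠ 0 then numK F s K else 0 := by
      intro j
      by_cases hj : j = 0
      · simp [hj]
      · have hnum : (∑ t : Fin (n + 2) → S, if t 0 = s ∧ σ (t j) = true then F t else 0)
            = numK F s K := by
          rw [sum_swap_coord F hFex s σ j hj, numK]
          exact Finset.sum_congr rfl fun t _ => by simp [hK]
        calc (∑ t : Fin (n + 2) → S, if t 0 = s ∧ j ≠ 0 ∧ σ (t j) = true then F t else 0)
            = ∑ t : Fin (n + 2) → S, if t 0 = s ∧ σ (t j) = true then F t else 0 :=
              Finset.sum_congr rfl fun t _ => by simp [hj]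
          _ = numK F s K := hnum
          _ = if j ≠ 0 then numK F s K else 0 := by rw [if_pos hj]
    rw [Finset.sum_congr rfl fun j _ => step2 j, ← Finset.sum_filter,
      Finset.sum_const, Finset.filter_ne', Finset.card_erase_of_mem (Finset.mem_univ 0),
      Finset.card_univ, Fintype.card_fin, nsmul_eq_mul]
    push_cast
    ring
  have key : (∑ t : Fin (n + 2) → S, if t 0 = s then F t * payoff G (acts σ t) s else 0)
      = (G.α s + G.β s * G.l) * marg F s + G.β s * G.k * ((n + 1 : ℝ) * numK F s K) := by
    have split : ∀ t : Fin (n + 2) → S,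
        (if t 0 = s then F t * payoff G (acts σ t) s else 0)
          = (G.α s + G.β s * G.l) * (if t 0 = s then F t else 0)
            + G.β s * G.k * (if t 0 = s then F t * ((acts σ t : ℕ) : ℝ) else 0) := by
      intro t
      by_cases h0 : t 0 = s
      · simp only [h0, if_true, payoff]; ring
      · simp [h0]
    rw [Finset.sum_congr rfl fun t _ => split t, Finset.sum_add_distrib,
      ← Finset.mul_sum, ← Finset.mul_sum, hS1, marg]
  rw [U, key]
  field_simp
  ring

end Aux

/-- under a CAD increase, the expected net payoff of acting weakly rises
on the participation set and weakly falls on the non-participation set, for any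
affine private-value coordination game and any strategy. -/
theorem cad_payoff_monotone {n : ℕ} {S : Type*} [Fintype S] [DecidableEq S] [Nonempty S]
    (F Q : (Fin (n + 2) → S) → ℝ)
    (hFpmf : IsPMF F) (hQpmf : IsPMF Q)
    (hFex : Exchangeable F) (hQex : Exchangeable Q)
    (hmarg : ∀ s, marg F s = marg Q s)
    (hpos : ∀ s, 0 < marg F s)
    (hCAD : CAD F Q)
    (G : AffineGame S) (σ : S → Bool) :
    (∀ s : S, σ s = true → U G Q σ s ≤ U G F σ s) ∧
    (∀ s : S, σ s = false → U G F σ s ≤ U G Q σ s) := by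
  set K : Finset S := univ.filter fun s' => σ s' = true with hK
  have hQpos : ∀ s, 0 < marg Q s := fun s => (hmarg s) ▸ hpos s
  have hUF : ∀ s, U G F σ s = G.α s + G.β s * (G.k * ((n + 1 : ℝ) *
      (numK F s K / marg F s)) + G.l) := fun s => U_eq F hFex G σ s (hpos s).ne'
  have hUQ : ∀ s, U G Q σ s = G.α s + G.β s * (G.k * ((n + 1 : ℝ) *
      (numK Q s K / marg Q s)) + G.l) := fun s => U_eq Q hQex G σ s (hQpos s).ne'
  have hcond : ∀ s : S, ∀ K' : Finset S,
      numK F s K' / marg F s = ∑ s' ∈ K', condProb F s {s'} := by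
    intro s K'
    rw [numK_sum_singletons, Finset.sum_div]
    exact Finset.sum_congr rfl fun s' _ => (condProb_eq F s {s'}).symm
  have hcondQ : ∀ s : S, ∀ K' : Finset S,
      numK Q s K' / marg Q s = ∑ s' ∈ K', condProb Q s {s'} := by
    intro s K'
    rw [numK_sum_singletons, Finset.sum_div]
    exact Finset.sum_congr rfl fun s' _ => (condProb_eq Q s {s'}).symm
  have main : ∀ s : S,
      (σ s = true → numK Q s K / marg Q s ≤ numK F s K / marg F s) ∧
      (σ s = false → numK F s K / marg F s ≤ numK Q s K / marg Q s) := by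
    intro s
    constructor
    · intro hs
      -- complement argument
      have hsK : s ∈ K := by simp [hK, hs]
      have hle : ∑ s' ∈ Kᶜ, condProb F s {s'} ≤ ∑ s' ∈ Kᶜ, condProb Q s {s'} := by
        refine Finset.sum_le_sum fun s' hs' => ?_
        have hne : s' ≠ s := by
          intro h; subst h
          exact (Finset.mem_compl.mp hs') hsK
        exact (hCAD.2 s).2 s' hne
      have hFsplit : numK F s K / marg F s = 1 - numK F s Kᶜ / marg F s := by
        have := numK_compl F s K
        field_simp [(hpos s).ne']
        linarith
      have hQsplit : numK Q s K / marg Q s = 1 - numK Q s Kᶜ / marg Q s := by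
        have := numK_compl Q s K
        field_simp [(hQpos s).ne']
        linarith
      rw [hFsplit, hQsplit, hcond, hcondQ]
      linarith
    · intro hs
      have hsK : s ∉ K := by simp [hK, hs]
      rw [hcond, hcondQ]
      refine Finset.sum_le_sum fun s' hs' => ?_
      have hne : s' ≠ s := fun h => hsK (h ▸ hs')
      exact (hCAD.2 s).2 s' hne
  have hβk : ∀ s, (0:ℝ) ≤ G.β s * G.k * (n + 1 : ℝ) := fun s => by
    have := G.hβ s
    have := G.hk.le
    positivity
  constructor
  · intro s hs
    rw [hUF s, hUQ s]
    have h := (main s).1 hs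
    nlinarith [hβk s, G.hβ s, G.hk.le]
  · intro s hs
    rw [hUF s, hUQ s]
    have h := (main s).2 hs
    nlinarith [hβk s, G.hβ s, G.hk.le]
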